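/- For every natural number n, Q_n(t,q) = ∑_{p ∈ P'_n} t^{fh(p)}·q^{w(p)} and R_n(t,q) = ∑_{p ∈ P_n} t^{fh(p)}·q^{w(p)}, as identities of polynomials in t and q. -/

import Mathlib

/-!
Both recurrences are the cases `b = 0` and `b = 1` of
`P ↦ (1 + q^(b+1) t²)·D P + [b+1]_q·t·P`. On a monomial `q^w t^h` this operator gives
`q^w ([h+b+1]_q t^(h+1) + [h]_q t^(h-1))`, using `[h+b+1]_q = [b+1]_q + q^(b+1) [h]_q`:
exactly the generating function of the one-step extensions of a prefix ending at height `h`,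
by an up step labelled `0, …, h+b` or a down step labelled `0, …, h-1`. Extending prefixes at
their end, induction on the length gives the claim, with `b = 0` for `𝒫'` and `b = 1` for `𝒫`.
-/

open Polynomial

noncomputable def qnat (m : ℕ) : Polynomial ℤ := ∑ i ∈ Finset.range m, X ^ i

/-- `ℤ[q][t]` is `Polynomial (Polynomial ℤ)`: the outer variable is `t`. -/
noncomputable def qD (p : Polynomial (Polynomial ℤ)) : Polynomial (Polynomial ℤ) :=
  p.sum fun m c => C (c * qnat m) * X ^ (m - 1)

noncomputable def opU (p : Polynomial (Polynomial ℤ)) : Polynomial (Polynomial ℤ) := X * p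

noncomputable def qPolyQ : ℕ → Polynomial (Polynomial ℤ)
  | 0 => 1
  | n + 1 => (1 + C (X : Polynomial ℤ) * X ^ 2) * qD (qPolyQ n) + X * qPolyQ n

noncomputable def qPolyR : ℕ → Polynomial (Polynomial ℤ)
  | 0 => 1
  | n + 1 => (1 + C ((X : Polynomial ℤ) ^ 2) * X ^ 2) * qD (qPolyR n)
      + (1 + C (X : Polynomial ℤ)) * X * qPolyR n

/-- `(true, l)` is an up step labelled `l`, `(false, l)` a down step labelled `l`; the path starts
at height `h`. -/
def dpValid : List (Bool × ℕ) → ℕ → Prop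
  | [], _ => True
  | (true, l) :: rest, h => l ≤ h + 1 ∧ dpValid rest (h + 1)
  | (false, l) :: rest, h => 1 ≤ h ∧ l + 1 ≤ h ∧ dpValid rest (h - 1)

def dpValid' : List (Bool × ℕ) → ℕ → Prop
  | [], _ => True
  | (true, l) :: rest, h => l ≤ h ∧ dpValid' rest (h + 1)
  | (false, l) :: rest, h => 1 ≤ h ∧ l + 1 ≤ h ∧ dpValid' rest (h - 1)

def finalHeight : List (Bool × ℕ) → ℕ → ℕ
  | [], h => h
  | (true, _) :: rest, h => finalHeight rest (h + 1)
  | (false, _) :: rest, h => finalHeight rest (h - 1)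

theorem qnat_zero : qnat 0 = 0 := Finset.sum_range_zero _

theorem qnat_one : qnat 1 = 1 := by simp [qnat]

theorem qnat_two : qnat 2 = 1 + X := by simp [qnat, Finset.sum_range_succ]

theorem qnat_add (k m : ℕ) : qnat (k + m) = qnat k + X ^ k * qnat m := by
  simp only [qnat, Finset.sum_range_add, Finset.mul_sum, pow_add]

theorem qD_add (p p' : Polynomial (Polynomial ℤ)) : qD (p + p') = qD p + qD p' := by
  unfold qD
  apply Polynomial.sum_add_index <;> simp [add_mul]

theorem qD_sum {ι : Type*} (s : Finset ι) (f : ι → Polynomial (Polynomial ℤ)) :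
    qD (∑ i ∈ s, f i) = ∑ i ∈ s, qD (f i) :=
  map_sum (AddMonoidHom.mk' qD qD_add) f s

theorem qD_C_mul_X_pow (c : Polynomial ℤ) (m : ℕ) :
    qD (C c * X ^ m) = C (c * qnat m) * X ^ (m - 1) := by
  rw [C_mul_X_pow_eq_monomial, qD, sum_monomial_index]
  simp

noncomputable def stepOp (b : ℕ) (p : Polynomial (Polynomial ℤ)) :
    Polynomial (Polynomial ℤ) :=
  (1 + C (X ^ (b + 1)) * X ^ 2) * qD p + C (qnat (b + 1)) * X * p

theorem stepOp_sum {ι : Type*} (b : ℕ) (s : Finset ι) (f : ι → Polynomial (Polynomial ℤ)) :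
    stepOp b (∑ i ∈ s, f i) = ∑ i ∈ s, stepOp b (f i) := by
  simp only [stepOp, qD_sum, Finset.mul_sum, Finset.sum_add_distrib]

theorem stepOp_C_mul_X_pow (b h : ℕ) (c : Polynomial ℤ) :
    stepOp b (C c * X ^ h) =
      C (c * qnat (h + b + 1)) * X ^ (h + 1) + C (c * qnat h) * X ^ (h - 1) := by
  rw [stepOp, qD_C_mul_X_pow]
  cases h with
  | zero =>
    simp [qnat_zero]
    ring
  | succ h =>
    rw [show h + 1 + b + 1 = (b + 1) + (h + 1) by omega, qnat_add (b + 1) (h + 1),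
      Nat.add_sub_cancel]
    simp only [map_add, map_mul, map_pow]
    ring

namespace WeightedDyckPrefix

def dpValidWith (b : ℕ) : List (Bool × ℕ) → ℕ → Prop
  | [], _ => True
  | (true, l) :: rest, h => l ≤ h + b ∧ dpValidWith b rest (h + 1)
  | (false, l) :: rest, h => 1 ≤ h ∧ l + 1 ≤ h ∧ dpValidWith b rest (h - 1)

theorem dpValidWith_zero_iff (p : List (Bool × ℕ)) (h : ℕ) :
    dpValidWith 0 p h ↔ dpValid' p h := by
  induction p generalizing h with
  | nil => simp [dpValidWith, dpValid']
  | cons s rest ih => obtain ⟨_ | _, l⟩ := s <;> simp [dpValidWith, dpValid', ih]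

theorem dpValidWith_one_iff (p : List (Bool × ℕ)) (h : ℕ) :
    dpValidWith 1 p h ↔ dpValid p h := by
  induction p generalizing h with
  | nil => simp [dpValidWith, dpValid]
  | cons s rest ih => obtain ⟨_ | _, l⟩ := s <;> simp [dpValidWith, dpValid, ih]

theorem finalHeight_append (p p' : List (Bool × ℕ)) (h : ℕ) :
    finalHeight (p ++ p') h = finalHeight p' (finalHeight p h) := by
  induction p generalizing h with
  | nil => rfl
  | cons s rest ih => obtain ⟨_ | _, l⟩ := s <;> simp [finalHeight, ih]

theorem dpValidWith_append (b : ℕ) (p p' : List (Bool × ℕ)) (h : ℕ) :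
    dpValidWith b (p ++ p') h ↔ dpValidWith b p h ∧ dpValidWith b p' (finalHeight p h) := by
  induction p generalizing h with
  | nil => simp [dpValidWith, finalHeight]
  | cons s rest ih => obtain ⟨_ | _, l⟩ := s <;> simp [dpValidWith, finalHeight, ih, and_assoc]

def steps (b h : ℕ) : Finset (Bool × ℕ) :=
  (Finset.range (h + b + 1)).map (Function.Embedding.sectR true ℕ) ∪
    (Finset.range h).map (Function.Embedding.sectR false ℕ)

theorem mem_steps_iff {b h : ℕ} {s : Bool × ℕ} : s ∈ steps b h ↔ dpValidWith b [s] h := by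
  obtain ⟨_ | _, l⟩ := s <;> simp [steps, dpValidWith]
  omega

theorem sum_steps {M : Type*} [AddCommMonoid M] (b h : ℕ) (f : Bool × ℕ → M) :
    ∑ s ∈ steps b h, f s =
      ∑ l ∈ Finset.range (h + b + 1), f (true, l) + ∑ l ∈ Finset.range h, f (false, l) := by
  rw [steps, Finset.sum_union, Finset.sum_map, Finset.sum_map]
  · rfl
  · simp [Finset.disjoint_left]

def prefixes (b : ℕ) : ℕ → Finset (List (Bool × ℕ))
  | 0 => {[]}
  | n + 1 => (prefixes b n).biUnion fun p => (steps b (finalHeight p 0)).image (p ++ [·])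

theorem mem_prefixes_iff (b n : ℕ) (p : List (Bool × ℕ)) :
    p ∈ prefixes b n ↔ p.length = n ∧ dpValidWith b p 0 := by
  induction n generalizing p with
  | zero =>
    simp only [prefixes, Finset.mem_singleton, List.length_eq_zero_iff, iff_self_and]
    rintro rfl
    trivial
  | succ n ih =>
    simp only [prefixes, Finset.mem_biUnion, Finset.mem_image, ih, mem_steps_iff]
    constructor
    · rintro ⟨p', ⟨rfl, hp'⟩, s, hs, rfl⟩
      simp [dpValidWith_append, hp', hs]
    · rintro ⟨hlen, hp⟩
      obtain ⟨p', s, rfl⟩ : ∃ p' s, p = p' ++ [s] := by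
        rcases List.eq_nil_or_concat' p with rfl | h
        · simp at hlen
        · exact h
      rw [dpValidWith_append] at hp
      exact ⟨p', ⟨by simpa using hlen, hp.1⟩, s, hp.2, rfl⟩

theorem sum_prefixes_succ {M : Type*} [AddCommMonoid M] (b n : ℕ) (f : List (Bool × ℕ) → M) :
    ∑ p ∈ prefixes b (n + 1), f p =
      ∑ p ∈ prefixes b n, ∑ s ∈ steps b (finalHeight p 0), f (p ++ [s]) := by
  rw [prefixes, Finset.sum_biUnion]
  · exact Finset.sum_congr rfl fun p _ => Finset.sum_image (by simp)
  · intro p _ p' _ hne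
    simp only [Function.onFun, Finset.disjoint_left, Finset.mem_image]
    rintro _ ⟨s, _, rfl⟩ ⟨s', _, h⟩
    exact hne (List.append_inj' h rfl).1.symm

noncomputable def weight (p : List (Bool × ℕ)) : Polynomial (Polynomial ℤ) :=
  X ^ finalHeight p 0 * C (X ^ (p.map Prod.snd).sum)

theorem weight_append_singleton (p : List (Bool × ℕ)) (up : Bool) (l : ℕ) :
    weight (p ++ [(up, l)]) =
      X ^ finalHeight [(up, l)] (finalHeight p 0) * C (X ^ (p.map Prod.snd).sum * X ^ l) := by
  simp [weight, finalHeight_append, pow_add]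


theorem stepOp_weight (b : ℕ) (p : List (Bool × ℕ)) :
    stepOp b (weight p) = ∑ s ∈ steps b (finalHeight p 0), weight (p ++ [s]) := by
  simp only [sum_steps, weight_append_singleton, finalHeight, ← Finset.mul_sum, ← map_sum]
  rw [weight, mul_comm, stepOp_C_mul_X_pow, qnat, qnat]
  ring

theorem iterate_stepOp_one_eq_sum_prefixes (b n : ℕ) :
    (stepOp b)^[n] 1 = ∑ p ∈ prefixes b n, weight p := by
  induction n with
  | zero => simp [prefixes, weight, finalHeight]
  | succ n ih =>
    rw [Function.iterate_succ_apply', ih, stepOp_sum, sum_prefixes_succ]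
    exact Finset.sum_congr rfl fun p _ => stepOp_weight b p

theorem iterate_stepOp_one_eq_finsum (b n : ℕ) :
    (stepOp b)^[n] 1 = ∑ᶠ p ∈ {p | p.length = n ∧ dpValidWith b p 0}, weight p := by
  rw [iterate_stepOp_one_eq_sum_prefixes, ← finsum_mem_coe_finset]
  exact finsum_mem_congr (Set.ext (mem_prefixes_iff b n)) fun _ _ => rfl

end WeightedDyckPrefix

theorem qPolyQ_eq_iterate (n : ℕ) : qPolyQ n = (stepOp 0)^[n] 1 := by
  induction n with
  | zero => rfl
  | succ n ih => simp [Function.iterate_succ_apply', ← ih, qPolyQ, stepOp, qnat_one]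

theorem qPolyR_eq_iterate (n : ℕ) : qPolyR n = (stepOp 1)^[n] 1 := by
  induction n with
  | zero => rfl
  | succ n ih => simp [Function.iterate_succ_apply', ← ih, qPolyR, stepOp, qnat_two]

theorem stmt15 (n : ℕ) :
    (qPolyQ n = ∑ᶠ p ∈ {p : List (Bool × ℕ) | p.length = n ∧ dpValid' p 0},
      (X : Polynomial (Polynomial ℤ)) ^ finalHeight p 0 *
        C ((X : Polynomial ℤ) ^ (p.map Prod.snd).sum)) ∧
    (qPolyR n = ∑ᶠ p ∈ {p : List (Bool × ℕ) | p.length = n ∧ dpValid p 0},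
      (X : Polynomial (Polynomial ℤ)) ^ finalHeight p 0 *
        C ((X : Polynomial ℤ) ^ (p.map Prod.snd).sum)) := by
  rw [qPolyQ_eq_iterate, qPolyR_eq_iterate, WeightedDyckPrefix.iterate_stepOp_one_eq_finsum,
    WeightedDyckPrefix.iterate_stepOp_one_eq_finsum]
  simp only [WeightedDyckPrefix.dpValidWith_zero_iff, WeightedDyckPrefix.dpValidWith_one_iff]
  exact ⟨rfl, rfl⟩
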